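/- Let τ, σ ∈ ℂ with Im τ > 0 and Im σ > 0, and let z ∈ ℂ with z ∉ {jτ + kσ + l : j, k, l ∈ ℤ}. Then Γ(z,τ,σ) · Γ(τ+σ−z,τ,σ) = 1. (With the convention extending Γ to negative imaginary parts by Γ(z,τ,σ) = 1/Γ(z−τ,−τ,σ), this is the inversion relation Γ(z,τ,σ)·Γ(−z,−σ,−τ) = 1.) -/

import Mathlib

namespace EGG

/-- Integer vectors in `ℤ³`. -/
abbrev V : Type := Fin 3 → ℤ

/-- gcd of the three coordinates. -/
def gcd3 (v : V) : ℕ := Nat.gcd (Nat.gcd (v 0).natAbs (v 1).natAbs) (v 2).natAbs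

/-- A vector of `ℤ³` is primitive if it is nonzero and the gcd of its coordinates is 1. -/
def Primitive (a : V) : Prop := a ≠ 0 ∧ gcd3 a = 1

/-- Cross product of integer vectors. -/
def cross (a b : V) : V :=
  ![a 1 * b 2 - a 2 * b 1, a 2 * b 0 - a 0 * b 2, a 0 * b 1 - a 1 * b 0]

/-- Dot product of integer vectors. -/
def dotZ (α a : V) : ℤ := α 0 * a 0 + α 1 * a 1 + α 2 * a 2

/-- Dot product of a rational vector with an integer vector. -/
def dotQ (α : Fin 3 → ℚ) (a : V) : ℚ := α 0 * (a 0 : ℚ) + α 1 * (a 1 : ℚ) + α 2 * (a 2 : ℚ)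

/-- Dot product of a real vector with an integer vector. -/
def dotR (l : Fin 3 → ℝ) (a : V) : ℝ := l 0 * (a 0 : ℝ) + l 1 * (a 1 : ℝ) + l 2 * (a 2 : ℝ)

/-- The pairing `α(x) = α₁x₁+α₂x₂+α₃x₃` of a rational vector with a complex vector. -/
noncomputable def pairQ (α : Fin 3 → ℚ) (x : Fin 3 → ℂ) : ℂ :=
  (α 0 : ℂ) * x 0 + (α 1 : ℂ) * x 1 + (α 2 : ℂ) * x 2

/-- The pairing `α(x) = α₁x₁+α₂x₂+α₃x₃` of an integer vector with a complex vector. -/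
noncomputable def pairZ (α : V) (x : Fin 3 → ℂ) : ℂ :=
  (α 0 : ℂ) * x 0 + (α 1 : ℂ) * x 1 + (α 2 : ℂ) * x 2

/-- The canonical map `ℤ³ → ℚ³`. -/
def toQ (a : V) : Fin 3 → ℚ := fun i => (a i : ℚ)

/-- Determinant of the 3×3 matrix with rows `α, β, δ`. -/
def det3Q (α β δ : Fin 3 → ℚ) : ℚ := Matrix.det (Matrix.of ![α, β, δ])

/-- `(α, β)` is an oriented basis of the plane `H(a) = {α : α·a = 0}`. -/
def IsOrientedBasis (a : V) (α β : Fin 3 → ℚ) : Prop :=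
  dotQ α a = 0 ∧ dotQ β a = 0 ∧
  LinearIndependent ℚ ![α, β] ∧
  (∀ δ : Fin 3 → ℚ, dotQ δ a = 0 → ∃ p q : ℚ, δ = p • α + q • β) ∧
  (∀ δ : Fin 3 → ℚ, 0 < dotQ δ a → 0 < det3Q α β δ)

/-- The domain `U⁺_a ⊆ ℂ³`. -/
noncomputable def UPlus (a : V) : Set (Fin 3 → ℂ) :=
  {x | ∃ α β : Fin 3 → ℚ, IsOrientedBasis a α β ∧
    0 < (pairQ α x * (starRingEnd ℂ) (pairQ β x)).im}

/-- `γ` is the direction vector of the wedge `(a,b)`: `γ` is primitive and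
`a × b = s • γ` for some integer `s ≥ 1` (the modulus). -/
def IsDirVec (a b γ : V) : Prop :=
  Primitive γ ∧ ∃ s : ℤ, 1 ≤ s ∧ cross a b = s • γ

/-- `C₊₋(a,b) = {δ ∈ ℤ³ : δ·a > 0, δ·b ≤ 0}`. -/
def Cpm (a b : V) : Set V := {δ | 0 < dotZ δ a ∧ dotZ δ b ≤ 0}

/-- `C₋₊(a,b) = {δ ∈ ℤ³ : δ·a ≤ 0, δ·b > 0}`. -/
def Cmp (a b : V) : Set V := {δ | dotZ δ a ≤ 0 ∧ 0 < dotZ δ b}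

/-- The factor `1 - e^{-2πi(δ(x)-w)/γ(x)}` appearing in the numerator of `Γ_{a,b}`. -/
noncomputable def gammaFacP (γ : V) (x : Fin 3 → ℂ) (w : ℂ) (δ : V) : ℂ :=
  1 - Complex.exp (-(2 * (Real.pi : ℂ) * Complex.I) * (pairZ δ x - w) / pairZ γ x)

/-- The factor `1 - e^{2πi(δ(x)-w)/γ(x)}` appearing in the denominator of `Γ_{a,b}`. -/
noncomputable def gammaFacM (γ : V) (x : Fin 3 → ℂ) (w : ℂ) (δ : V) : ℂ :=
  1 - Complex.exp ((2 * (Real.pi : ℂ) * Complex.I) * (pairZ δ x - w) / pairZ γ x)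

/-- The gamma function `Γ_{a,b}(w,x)` of the wedge `(a,b)` with direction vector `γ`:
the products run over the sets `C₊₋(a,b)/ℤγ` and `C₋₊(a,b)/ℤγ`; each factor is evaluated
on the chosen representative `Quotient.out q` of the class `q` (the factors are constant
on classes modulo `ℤγ`). -/
noncomputable def GammaWedge (a b γ : V) (w : ℂ) (x : Fin 3 → ℂ) : ℂ :=
  if a = b then 1 else
    (∏' q : (QuotientAddGroup.mk '' Cpm a b : Set (V ⧸ AddSubgroup.zmultiples γ)),
      gammaFacP γ x w (Quotient.out (q : V ⧸ AddSubgroup.zmultiples γ))) /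
    (∏' q : (QuotientAddGroup.mk '' Cmp a b : Set (V ⧸ AddSubgroup.zmultiples γ)),
      gammaFacM γ x w (Quotient.out (q : V ⧸ AddSubgroup.zmultiples γ)))

/-- The theta function `θ₀(z,τ)`, for `Im τ > 0`. -/
noncomputable def theta0 (z τ : ℂ) : ℂ :=
  ∏' j : ℕ, ((1 - Complex.exp (2 * (Real.pi : ℂ) * Complex.I * (((j : ℂ) + 1) * τ - z))) *
    (1 - Complex.exp (2 * (Real.pi : ℂ) * Complex.I * ((j : ℂ) * τ + z))))

/-- The elliptic gamma function `Γ(z,τ,σ)`, for `Im τ > 0` and `Im σ > 0`. -/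
noncomputable def ellGamma (z τ σ : ℂ) : ℂ :=
  (∏' p : ℕ × ℕ, (1 - Complex.exp (2 * (Real.pi : ℂ) * Complex.I *
      (((p.1 : ℂ) + 1) * τ + ((p.2 : ℂ) + 1) * σ - z)))) /
  (∏' p : ℕ × ℕ, (1 - Complex.exp (2 * (Real.pi : ℂ) * Complex.I *
      ((p.1 : ℂ) * τ + (p.2 : ℂ) * σ + z))))

/-- The elliptic gamma function `Γ̃(z,τ,σ)` in the domain `Im τ < 0 < Im σ`. -/
noncomputable def ellGammaTilde (z τ σ : ℂ) : ℂ :=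
  (∏' p : ℕ × ℕ, (1 - Complex.exp (2 * (Real.pi : ℂ) * Complex.I *
      (z - ((p.1 : ℂ) + 1) * τ + (p.2 : ℂ) * σ)))) /
  (∏' p : ℕ × ℕ, (1 - Complex.exp (2 * (Real.pi : ℂ) * Complex.I *
      (-z - (p.1 : ℂ) * τ + ((p.2 : ℂ) + 1) * σ))))

/-- The polynomial `P₂`. -/
noncomputable def P2 (w x₁ x₂ : ℂ) : ℂ :=
  (w ^ 2 - (x₁ + x₂) * w + (x₁ ^ 2 + x₂ ^ 2 + 3 * x₁ * x₂) / 6) / (x₁ * x₂)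

/-- The Bernoulli polynomial `P₃ = B₃,₃`. -/
noncomputable def P3 (w x₁ x₂ x₃ : ℂ) : ℂ :=
  w ^ 3 / (x₁ * x₂ * x₃) - (3 * (x₁ + x₂ + x₃) / (2 * (x₁ * x₂ * x₃))) * w ^ 2
    + ((x₁ ^ 2 + x₂ ^ 2 + x₃ ^ 2 + 3 * x₁ * x₂ + 3 * x₂ * x₃ + 3 * x₁ * x₃)
        / (2 * (x₁ * x₂ * x₃))) * w
    - (1 / 4) * (x₁ + x₂ + x₃) * (1 / x₁ + 1 / x₂ + 1 / x₃)

/-- The real polynomial `R₃ = B₂,₃`. -/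
noncomputable def R3 (ζ t s : ℝ) : ℝ :=
  ζ ^ 3 / (t * s) - (3 / 2) * (1 / t + 1 / s) * ζ ^ 2
    + (t / (2 * s) + s / (2 * t) + 3 / 2) * ζ - (t + s) / 4

/-- The hermitian weight `h₂(z,τ)` for the theta bundle. -/
noncomputable def h2 (z τ : ℂ) : ℝ :=
  Real.exp (-2 * Real.pi * z.im ^ 2 / τ.im + 2 * Real.pi * (z - τ / 6).im)

/-- The hermitian weight `h₃(z,τ,σ)`. -/
noncomputable def h3 (z τ σ : ℂ) : ℝ :=
  Real.exp (-(2 * Real.pi / 3) * R3 z.im τ.im σ.im)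

/-- The finite product of theta functions `Δ` with parameters `A₁ = α₁(x)`, `A₂ = α₂(x)`,
`A₃ = α₃(x)` and first framing coordinate `m = μ(a)`:
`∏_{j=0}^{m-1} θ₀((w+jA₁)/A₃, A₂/A₃)` for `m ≥ 0` and
`(∏_{j=m}^{-1} θ₀((w+jA₁)/A₃, A₂/A₃))⁻¹` for `m < 0`. -/
noncomputable def DeltaInt (w A₁ A₂ A₃ : ℂ) (m : ℤ) : ℂ :=
  if 0 ≤ m then
    ∏ j ∈ Finset.range m.toNat, theta0 ((w + (j : ℂ) * A₁) / A₃) (A₂ / A₃)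
  else
    (∏ j ∈ Finset.range (-m).toNat, theta0 ((w - ((j : ℂ) + 1) * A₁) / A₃) (A₂ / A₃))⁻¹

/-!
Both infinite products in `ellGamma` are instances of
`latticeProd c τ σ = ∏_{j,k ≥ 0} (1 - e^{2πi(jτ + kσ + c)})`: the denominator of `Γ(z,τ,σ)` is
`latticeProd z` and its numerator is `latticeProd (τ + σ - z)`. Hence `Γ(z)` and `Γ(τ + σ - z)` are
mutually inverse quotients, and it remains to see that neither product vanishes. Both products
converge absolutely since `|e^{2πiτ}|, |e^{2πiσ}| < 1`, and the condition on `z` says that no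
factor is zero.
-/

open Complex
open scoped Real

noncomputable def latticeProd (c τ σ : ℂ) : ℂ :=
  ∏' p : ℕ × ℕ, (1 - cexp (2 * π * I * (p.1 * τ + p.2 * σ + c)))

lemma summable_norm_cexp_two_pi_I_mul_lattice {τ σ : ℂ} (hτ : 0 < τ.im) (hσ : 0 < σ.im)
    (c : ℂ) : Summable fun p : ℕ × ℕ => ‖cexp (2 * π * I * (p.1 * τ + p.2 * σ + c))‖ := by
  have geometric (w : ℂ) (hw : 0 < w.im) : Summable fun n : ℕ => ‖cexp (2 * π * I * w) ^ n‖ := by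
    simpa only [norm_pow] using summable_geometric_of_lt_one (norm_nonneg _)
      (UpperHalfPlane.norm_exp_two_pi_I_lt_one ⟨w, hw⟩)
  refine (((geometric τ hτ).mul_norm (geometric σ hσ)).mul_left ‖cexp (2 * π * I * c)‖).congr
    fun p => ?_
  rw [← norm_mul, ← exp_nat_mul, ← exp_nat_mul, ← exp_add, ← exp_add]
  ring_nf

lemma one_sub_cexp_two_pi_I_mul_ne_zero {w : ℂ} (hw : ∀ n : ℤ, w ≠ n) :
    1 - cexp (2 * π * I * w) ≠ 0 := by
  rw [sub_ne_zero, ne_comm, Ne, exp_eq_one_iff]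
  rintro ⟨n, hn⟩
  exact hw n (mul_left_cancel₀ two_pi_I_ne_zero (hn.trans (mul_comm _ _)))

lemma latticeProd_ne_zero {c τ σ : ℂ} (hτ : 0 < τ.im) (hσ : 0 < σ.im)
    (hc : ∀ (j k : ℕ) (n : ℤ), j * τ + k * σ + c ≠ n) : latticeProd c τ σ ≠ 0 := by
  simpa only [latticeProd, ← sub_eq_add_neg] using
    tprod_one_add_ne_zero_of_summable
      (f := fun p : ℕ × ℕ => -cexp (2 * π * I * (p.1 * τ + p.2 * σ + c)))
      (fun p => by simpa only [← sub_eq_add_neg] using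
        one_sub_cexp_two_pi_I_mul_ne_zero (hc p.1 p.2))
      (by simpa only [norm_neg] using summable_norm_cexp_two_pi_I_mul_lattice hτ hσ c)

lemma ellGamma_eq_latticeProd_div (z τ σ : ℂ) :
    ellGamma z τ σ = latticeProd (τ + σ - z) τ σ / latticeProd z τ σ := by
  unfold ellGamma latticeProd
  congr 1
  exact tprod_congr fun p => by ring_nf

/-- the inversion relation `Γ(z,τ,σ)·Γ(τ+σ−z,τ,σ) = 1`. -/
theorem statement17 (z τ σ : ℂ) (hτ : 0 < τ.im) (hσ : 0 < σ.im)
    (hz : ∀ j k l : ℤ, z ≠ (j : ℂ) * τ + (k : ℂ) * σ + (l : ℂ)) :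
    ellGamma z τ σ * ellGamma (τ + σ - z) τ σ = 1 := by
  have hz₀ : latticeProd z τ σ ≠ 0 := latticeProd_ne_zero hτ hσ fun j k n h =>
    hz (-j) (-k) n (by push_cast; linear_combination h)
  have hz₁ : latticeProd (τ + σ - z) τ σ ≠ 0 := latticeProd_ne_zero hτ hσ fun j k n h =>
    hz (j + 1) (k + 1) (-n) (by push_cast; linear_combination -h)
  rw [ellGamma_eq_latticeProd_div, ellGamma_eq_latticeProd_div, sub_sub_cancel,
    div_mul_div_cancel₀ hz₀, div_self hz₁]

end EGG
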